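/- Let A = ⊕_{n∈ℕ} A_{(n)} be an ℕ-graded vertex Poisson algebra. Then A_{(1)} is a Courant A_{(0)}-algebroid, with A_{(0)}-module structure from the product, bracket [u,v] = u_0 v, anchor π(u)(a) = u_0 a, pairing ⟨u,v⟩ = u_1 v, and derivation ∂: A_{(0)} → A_{(1)} the restriction of the differential. -/

import Mathlib

open scoped BigOperators

noncomputable section

/-- A vertex Lie algebra over `ℂ`, in component form: `Y₋(a,x) = ∑ₙ (op n a) x^{-n-1}`,
with `d = ∂`. The axioms are truncation, `Y₋(∂a,x) = (d/dx)Y₋(a,x)` (in components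
`(∂a)ₙ b = -n a_{n-1} b`), half skew symmetry and the half commutator formula. -/
structure VertexLie (A : Type) [AddCommGroup A] [Module ℂ A] where
  d : A →ₗ[ℂ] A
  op : ℕ → A →ₗ[ℂ] A →ₗ[ℂ] A
  trunc : ∀ a b : A, ∃ N : ℕ, ∀ n ≥ N, op n a b = 0
  op_d_zero : ∀ a b : A, op 0 (d a) b = 0
  op_d : ∀ (a b : A) (n : ℕ), op (n + 1) (d a) b = (-(n + 1 : ℂ)) • op n a b
  skew : ∀ (a b : A) (n N : ℕ), (∀ i ≥ N, op (n + i) b a = 0) →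
    op n a b = ∑ i ∈ Finset.range N,
      ((-1 : ℂ) ^ (n + i + 1) * ((Nat.factorial i : ℂ))⁻¹) • (⇑d)^[i] (op (n + i) b a)
  half_comm : ∀ (a b c : A) (m n : ℕ),
    op m a (op n b c) - op n b (op m a c)
      = ∑ i ∈ Finset.range (m + 1), ((Nat.choose m i : ℂ)) • op (m + n - i) (op i a b) c

/-- A vertex Poisson algebra: a differential commutative algebra with a compatible
vertex Lie algebra structure such that each `op n a` is a derivation of the product. -/
structure VertexPoisson (A : Type) [CommRing A] [Algebra ℂ A] extends VertexLie A where
  d_mul : ∀ a b : A, d (a * b) = a * d b + b * d a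
  op_mul : ∀ (n : ℕ) (a b c : A), op n a (b * c) = op n a b * c + b * op n a c

/-- An `ℕ`-graded vertex Poisson algebra. -/
structure NGradedVertexPoisson (A : Type) [CommRing A] [Algebra ℂ A]
    extends VertexPoisson A where
  gr : ℕ → Submodule ℂ A
  internal : DirectSum.IsInternal gr
  one_mem : (1 : A) ∈ gr 0
  mul_mem : ∀ {m n : ℕ} {a b : A}, a ∈ gr m → b ∈ gr n → a * b ∈ gr (m + n)
  d_mem : ∀ {r : ℕ} {a : A}, a ∈ gr r → d a ∈ gr (r + 1)
  op_mem : ∀ {n r : ℕ} {a b : A} (m : ℕ), a ∈ gr n → b ∈ gr r →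
    m + 1 ≤ n + r → op m a b ∈ gr (n + r - m - 1)
  op_gr_zero : ∀ {n r : ℕ} {a b : A} (m : ℕ), a ∈ gr n → b ∈ gr r →
    n + r < m + 1 → op m a b = 0

/-!
Everything is degree counting in the vertex Lie axioms. For `a ∈ A₍ₙ₎` and `b ∈ A₍ᵣ₎` the
product `a_m b` vanishes once `m ≥ n + r`, so for `n + r ≤ 2` the skew-symmetry series stops
after at most two terms: this gives the antisymmetry `u₀a = -a₀u`, the symmetry of the pairing
and `u₀v + v₀u = ∂(u₁v)`. Combined with the derivation property of `a₀` and with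
`(∂a)₁ = -a₀`, it yields the `A₍₀₎`-linearity statements and the axioms involving `∂`. The
commutator formula with `m = 0` says that `u₀` is a derivation of every product `b_n c`; for
`n = 0` and `n = 1` this is the Leibniz identity and the invariance of the pairing.
-/

namespace VertexLie

variable {A : Type} [AddCommGroup A] [Module ℂ A] (V : VertexLie A)

theorem op_zero_op (a b c : A) (n : ℕ) :
    V.op 0 a (V.op n b c) = V.op n (V.op 0 a b) c + V.op n b (V.op 0 a c) := by
  have h := V.half_comm a b c 0 n
  simp only [zero_add, Finset.sum_range_one, Nat.choose_self, Nat.cast_one, one_smul,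
    Nat.sub_zero] at h
  exact sub_eq_iff_eq_add.mp h

theorem op_one_d (a b : A) : V.op 1 (V.d a) b = -V.op 0 a b := by
  simpa using V.op_d a b 0

theorem op_eq_neg_one_pow_smul_op {a b : A} {n : ℕ} (h : ∀ i ≥ 1, V.op (n + i) b a = 0) :
    V.op n a b = (-1 : ℂ) ^ (n + 1) • V.op n b a := by
  simpa using V.skew a b n 1 h

theorem op_zero_eq_neg_op_zero_add_d {a b : A} (h : ∀ i ≥ 2, V.op i b a = 0) :
    V.op 0 a b = -V.op 0 b a + V.d (V.op 1 b a) := by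
  rw [V.skew a b 0 2 (by simpa using h), Finset.sum_range_succ, Finset.sum_range_one]
  norm_num

end VertexLie

namespace NGradedVertexPoisson

variable {A : Type} [CommRing A] [Algebra ℂ A] (G : NGradedVertexPoisson A)

theorem op_eq_zero_of_le {m n r : ℕ} {a b : A} (ha : a ∈ G.gr n) (hb : b ∈ G.gr r)
    (h : n + r ≤ m) : G.op m a b = 0 :=
  G.op_gr_zero m ha hb (by omega)

theorem op_zero_antisymm {n r : ℕ} {a b : A} (ha : a ∈ G.gr n) (hb : b ∈ G.gr r)
    (h : n + r ≤ 1) : G.op 0 a b = -G.op 0 b a := by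
  simpa using G.op_eq_neg_one_pow_smul_op (n := 0) fun i hi ↦
    G.op_eq_zero_of_le hb ha (by omega)

theorem op_one_comm {n r : ℕ} {a b : A} (ha : a ∈ G.gr n) (hb : b ∈ G.gr r)
    (h : n + r ≤ 2) : G.op 1 a b = G.op 1 b a := by
  simpa using G.op_eq_neg_one_pow_smul_op (n := 1) fun i hi ↦
    G.op_eq_zero_of_le hb ha (by omega)

theorem op_zero_add_op_zero {n r : ℕ} {a b : A} (ha : a ∈ G.gr n) (hb : b ∈ G.gr r)
    (h : n + r ≤ 2) : G.op 0 a b + G.op 0 b a = G.d (G.op 1 a b) := by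
  rw [G.op_zero_eq_neg_op_zero_add_d fun i hi ↦ G.op_eq_zero_of_le hb ha (by omega),
    G.op_one_comm hb ha (by omega)]
  abel

variable {a a' u v : A}

theorem op_zero_mul_left (ha : a ∈ G.gr 0) (ha' : a' ∈ G.gr 0) (hu : u ∈ G.gr 1) :
    G.op 0 (a * u) a' = a * G.op 0 u a' := by
  rw [G.op_zero_antisymm (G.mul_mem ha hu) ha' le_rfl, G.op_mul,
    G.op_eq_zero_of_le ha' ha le_rfl, G.op_zero_antisymm hu ha' le_rfl]
  ring

theorem op_one_mul_left (ha : a ∈ G.gr 0) (hu : u ∈ G.gr 1) (hv : v ∈ G.gr 1) :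
    G.op 1 (a * u) v = a * G.op 1 u v := by
  rw [G.op_one_comm (G.mul_mem ha hu) hv le_rfl, G.op_mul,
    G.op_eq_zero_of_le hv ha le_rfl, G.op_one_comm hu hv le_rfl]
  ring

theorem op_one_d_right (ha : a ∈ G.gr 0) (hu : u ∈ G.gr 1) :
    G.op 1 u (G.d a) = G.op 0 u a := by
  rw [G.op_one_comm hu (G.d_mem ha) le_rfl, G.op_one_d, G.op_zero_antisymm ha hu le_rfl, neg_neg]

theorem op_zero_d_right (ha : a ∈ G.gr 0) (hu : u ∈ G.gr 1) :
    G.op 0 u (G.d a) = G.d (G.op 0 u a) := by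
  rw [G.op_zero_eq_neg_op_zero_add_d fun i hi ↦ G.op_eq_zero_of_le (G.d_mem ha) hu (by omega),
    G.op_d_zero, G.op_one_d, ← G.op_zero_antisymm hu ha le_rfl, neg_zero, zero_add]

end NGradedVertexPoisson

/-- For an `ℕ`-graded vertex Poisson algebra `A = ⊕ₙ A₍ₙ₎`, the degree-one subspace
`A₍₁₎` is a Courant `A₍₀₎`-algebroid, with module structure from the product,
bracket `[u,v] = u₀v`, anchor `π(u)(a) = u₀a`, pairing `⟨u,v⟩ = u₁v`,
and derivation the restriction of `∂`. -/
theorem stmt11 {A : Type} [CommRing A] [Algebra ℂ A] (G : NGradedVertexPoisson A) :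
    ∀ a ∈ G.gr 0, ∀ a' ∈ G.gr 0, ∀ u ∈ G.gr 1, ∀ v ∈ G.gr 1, ∀ w ∈ G.gr 1,
      -- closure of the operations:
      (G.op 0 u v ∈ G.gr 1 ∧ G.op 1 u v ∈ G.gr 0 ∧ G.op 0 u a ∈ G.gr 0 ∧
        G.d a ∈ G.gr 1 ∧ a * u ∈ G.gr 1) ∧
      -- Leibniz algebra:
      (G.op 0 u (G.op 0 v w) = G.op 0 (G.op 0 u v) w + G.op 0 v (G.op 0 u w)) ∧
      -- the anchor acts by derivations, is A₍₀₎-linear, and is a Leibniz homomorphism: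
      (G.op 0 u (a * a') = a * G.op 0 u a' + (G.op 0 u a) * a') ∧
      (G.op 0 (a * u) a' = a * G.op 0 u a') ∧
      (G.op 0 (G.op 0 u v) a = G.op 0 u (G.op 0 v a) - G.op 0 v (G.op 0 u a)) ∧
      -- the pairing is A₍₀₎-bilinear and symmetric:
      (G.op 1 (a * u) v = a * G.op 1 u v) ∧
      (G.op 1 u v = G.op 1 v u) ∧
      -- ∂ is a derivation with π ∘ ∂ = 0:
      (G.d (a * a') = a * G.d a' + a' * G.d a) ∧
      (G.op 0 (G.d a) a' = 0) ∧
      -- the five Courant axioms: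
      (G.op 0 u (a * v) = a * G.op 0 u v + (G.op 0 u a) * v) ∧
      (G.op 1 (G.op 0 u v) w + G.op 1 v (G.op 0 u w) = G.op 0 u (G.op 1 v w)) ∧
      (G.op 0 u (G.d a) = G.d (G.op 0 u a)) ∧
      (G.op 1 u (G.d a) = G.op 0 u a) ∧
      (G.op 0 u v + G.op 0 v u = G.d (G.op 1 u v)) := by
  intro a ha a' ha' u hu v hv w _
  refine ⟨⟨G.op_mem 0 hu hv (by omega), G.op_mem 1 hu hv (by omega),
      G.op_mem 0 hu ha (by omega), G.d_mem ha, G.mul_mem ha hu⟩,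
    G.op_zero_op u v w 0, by rw [G.op_mul]; ring, G.op_zero_mul_left ha ha' hu,
    eq_sub_of_add_eq (G.op_zero_op u v a 0).symm, G.op_one_mul_left ha hu hv,
    G.op_one_comm hu hv le_rfl, G.d_mul a a', G.op_d_zero a a', by rw [G.op_mul]; ring,
    (G.op_zero_op u v w 1).symm, G.op_zero_d_right ha hu, G.op_one_d_right ha hu,
    G.op_zero_add_op_zero hu hv le_rfl⟩
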